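/- Let θ, θ' > 0 and a, b ∈ ℝ. Then ∫_ℝ ξ(v/(2θ) + a/2) · ξ(v/(2θ') + b/2) dv = (1/(48 θθ')) · δ⁴_θδ⁴_{θ'}(|·|³)(aθ − bθ'), where |·|³ denotes the function x ↦ |x|³. -/

import Mathlib

open Real MeasureTheory

/-- `ξ(t) = max(1−3|t|, |t|−1)` for `|t| ≤ 1` and `ξ(t) = 0` for `|t| > 1`. -/
noncomputable def xi (t : ℝ) : ℝ := if |t| ≤ 1 then max (1 - 3*|t|) (|t| - 1) else 0

/-- Fourth-order central difference with step `θ`. -/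
noncomputable def cdiff4 (θ : ℝ) (F : ℝ → ℝ) (x : ℝ) : ℝ :=
  F (x + 2*θ) - 4 * F (x + θ) + 6 * F x - 4 * F (x - θ) + F (x - 2*θ)




-- base derivative lemmas
lemma phi_deriv (u : ℝ) : HasDerivAt (fun x : ℝ => x * |x|) (2 * |u|) u := by
  rcases lt_trichotomy u 0 with hu | hu | hu
  · have h : HasDerivAt (fun x : ℝ => -(x^2)) (2 * |u|) u := by
      have := (hasDerivAt_pow 2 u).neg
      simpa [abs_of_neg hu, Pi.neg_def] using this.congr_deriv (by push_cast; ring)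
    apply h.congr_of_eventuallyEq
    filter_upwards [Iio_mem_nhds hu] with x hx
    rw [abs_of_neg hx]; ring
  · subst hu
    rw [hasDerivAt_iff_tendsto_slope]
    simp only [abs_zero, mul_zero]
    have : ∀ x : ℝ, slope (fun x : ℝ => x * |x|) 0 x = |x| := by
      intro x
      by_cases hx : x = 0
      · simp [slope, hx]
      · simp [slope_def_field, hx]
    refine Filter.Tendsto.congr (fun x => (this x).symm) ?_
    have h0 : Filter.Tendsto (fun x : ℝ => |x|) (nhdsWithin 0 {(0:ℝ)}ᶜ) (nhds |(0:ℝ)|) :=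
      (continuous_abs.tendsto 0).mono_left nhdsWithin_le_nhds
    simpa using h0
  · have h : HasDerivAt (fun x : ℝ => x^2) (2 * |u|) u := by
      have := hasDerivAt_pow 2 u
      simpa [abs_of_pos hu] using this.congr_deriv (by push_cast; ring)
    apply h.congr_of_eventuallyEq
    filter_upwards [Ioi_mem_nhds hu] with x hx
    rw [abs_of_pos hx]; ring

lemma psi_deriv (u : ℝ) : HasDerivAt (fun x : ℝ => |x|^3) (3 * (u * |u|)) u := by
  rcases lt_trichotomy u 0 with hu | hu | hu
  · have h : HasDerivAt (fun x : ℝ => -(x^3)) (3 * (u * |u|)) u := by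
      have := (hasDerivAt_pow 3 u).neg
      simpa [abs_of_neg hu, Pi.neg_def] using this.congr_deriv (by push_cast; ring)
    apply h.congr_of_eventuallyEq
    filter_upwards [Iio_mem_nhds hu] with x hx
    rw [abs_of_neg hx]; ring
  · subst hu
    rw [hasDerivAt_iff_tendsto_slope]
    simp only [abs_zero, mul_zero, mul_zero]
    have hb : ∀ x : ℝ, ‖slope (fun x : ℝ => |x|^3) 0 x‖ ≤ x^2 := by
      intro x
      by_cases hx : x = 0
      · simp [slope, hx]
      · have : slope (fun x : ℝ => |x|^3) 0 x = |x|^3 / x := by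
          simp [slope_def_field]
        rw [this, norm_div]
        rw [show ‖|x|^3‖ = |x|^3 by simp [abs_of_nonneg, pow_nonneg, abs_nonneg]]
        rw [show ‖x‖ = |x| by rfl]
        rw [div_le_iff₀ (abs_pos.mpr hx)]
        rw [show x^2 * |x| = |x|^3 by rw [← sq_abs]; ring]
    have h2 : Filter.Tendsto (fun x : ℝ => x^2) (nhdsWithin 0 {(0:ℝ)}ᶜ) (nhds 0) := by
      have := ((continuous_pow 2).tendsto (0:ℝ)).mono_left (nhdsWithin_le_nhds (s := {(0:ℝ)}ᶜ))
      simpa using this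
    exact squeeze_zero_norm hb h2
  · have h : HasDerivAt (fun x : ℝ => x^3) (3 * (u * |u|)) u := by
      have := hasDerivAt_pow 3 u
      simpa [abs_of_pos hu] using this.congr_deriv (by push_cast; ring)
    apply h.congr_of_eventuallyEq
    filter_upwards [Ioi_mem_nhds hu] with x hx
    rw [abs_of_pos hx]

/-- antiderivative of `(c+d*t)*|t-s|` -/
noncomputable def Ga (c d s t : ℝ) : ℝ :=
  (c + d*s) * ((t-s) * |t-s|) / 2 + d * |t-s|^3 / 3

lemma Ga_deriv (c d s t : ℝ) : HasDerivAt (Ga c d s) ((c + d*t) * |t-s|) t := by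
  have h1 : HasDerivAt (fun t : ℝ => (t-s) * |t-s|) (2 * |t-s|) t := by
    have := (phi_deriv (t-s)).comp t ((hasDerivAt_id t).sub_const s)
    simpa [Function.comp_def] using this
  have h2 : HasDerivAt (fun t : ℝ => |t-s|^3) (3 * ((t-s) * |t-s|)) t := by
    have := (psi_deriv (t-s)).comp t ((hasDerivAt_id t).sub_const s)
    simpa [Function.comp_def] using this
  have := ((h1.const_mul ((c + d*s))).div_const 2).add ((h2.const_mul d).div_const 3)
  exact this.congr_deriv (by ring)

lemma integral_lin_abs (c d s l u : ℝ) :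
    ∫ t in l..u, (c + d*t) * |t-s| = Ga c d s u - Ga c d s l := by
  have hc : Continuous fun t : ℝ => (c + d*t) * |t-s| := by continuity
  exact intervalIntegral.integral_eq_sub_of_hasDerivAt (fun t _ => Ga_deriv c d s t)
    (hc.intervalIntegrable l u)



lemma xi_eq (t : ℝ) :
    xi t = -(1/2) * (|t+1| - 4*|t+1/2| + 6*|t| - 4*|t-1/2| + |t-1|) := by
  have key : ∀ u : ℝ, 0 ≤ u →
      xi u = -(1/2) * (|u+1| - 4*|u+1/2| + 6*|u| - 4*|u-1/2| + |u-1|) := by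
    intro u hu
    unfold xi
    rw [abs_of_nonneg hu, abs_of_nonneg (by linarith : (0:ℝ) ≤ u+1),
      abs_of_nonneg (by linarith : (0:ℝ) ≤ u+1/2)]
    rcases le_total u (1/2) with h1 | h1
    · rw [abs_of_nonpos (by linarith : u-1/2 ≤ 0), abs_of_nonpos (by linarith : u-1 ≤ 0),
        if_pos (by linarith), max_eq_left (by linarith)]
      ring
    · rcases le_total u 1 with h2 | h2
      · rw [abs_of_nonneg (by linarith : (0:ℝ) ≤ u-1/2), abs_of_nonpos (by linarith : u-1 ≤ 0),
          if_pos h2, max_eq_right (by linarith)]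
        ring
      · rw [abs_of_nonneg (by linarith : (0:ℝ) ≤ u-1/2),
          abs_of_nonneg (by linarith : (0:ℝ) ≤ u-1)]
        split_ifs with h3
        · have h4 : u = 1 := le_antisymm h3 h2
          rw [h4]; norm_num
        · ring
  rcases le_total 0 t with h | h
  · exact key t h
  · have h2 : xi t = xi (-t) := by unfold xi; rw [abs_neg]
    rw [h2, key (-t) (by linarith)]
    rw [show -t+1 = -(t-1) by ring, show -t+1/2 = -(t-1/2) by ring,
      show -t-1/2 = -(t+1/2) by ring, show -t-1 = -(t+1) by ring,
      abs_neg, abs_neg, abs_neg, abs_neg, abs_neg]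
    ring

lemma xi_cont : Continuous xi := by
  have : xi = fun t => -(1/2) * (|t+1| - 4*|t+1/2| + 6*|t| - 4*|t-1/2| + |t-1|) :=
    funext xi_eq
  rw [this]; continuity

lemma xi_zero {t : ℝ} (h : 1 ≤ |t|) : xi t = 0 := by
  unfold xi
  split_ifs with hc
  · have h1 : |t| = 1 := le_antisymm hc h
    rw [h1]; norm_num
  · rfl

set_option maxHeartbeats 4000000 in
lemma K_eq (s : ℝ) : (∫ t : ℝ, xi t * |t - s|) =
    -(1/6) * (|s+1|^3 - 4*|s+1/2|^3 + 6*|s|^3 - 4*|s-1/2|^3 + |s-1|^3) := by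
  have hii : ∀ l u : ℝ, IntervalIntegrable (fun t => xi t * |t - s|) volume l u := by
    intro l u
    exact (xi_cont.mul (by continuity)).intervalIntegrable l u
  have h1 : (∫ t : ℝ, xi t * |t - s|) = ∫ t in Set.Icc (-1:ℝ) 1, xi t * |t - s| := by
    rw [← MeasureTheory.integral_indicator measurableSet_Icc]
    congr 1
    funext t
    by_cases ht : t ∈ Set.Icc (-1:ℝ) 1
    · rw [Set.indicator_of_mem ht]
    · rw [Set.indicator_of_notMem ht]
      simp only [Set.mem_Icc, not_and_or, not_le] at ht
      have h2 : 1 ≤ |t| := by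
        rcases ht with ht | ht
        · rw [abs_of_nonpos (by linarith)]; linarith
        · rw [abs_of_nonneg (by linarith)]; linarith
      rw [xi_zero h2, zero_mul]
  rw [h1, MeasureTheory.integral_Icc_eq_integral_Ioc,
    ← intervalIntegral.integral_of_le (by norm_num : (-1:ℝ) ≤ 1)]
  rw [← intervalIntegral.integral_add_adjacent_intervals (hii (-1) (-(1/2))) (hii (-(1/2)) 1),
    ← intervalIntegral.integral_add_adjacent_intervals (hii (-(1/2)) 0) (hii 0 1),
    ← intervalIntegral.integral_add_adjacent_intervals (hii 0 (1/2)) (hii (1/2) 1)]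
  have P1 : (∫ t in (-1:ℝ)..(-(1/2):ℝ), xi t * |t-s|) = Ga (-1) (-1) s (-(1/2)) - Ga (-1) (-1) s (-1) := by
    rw [show (∫ t in (-1:ℝ)..(-(1/2):ℝ), xi t * |t-s|)
        = ∫ t in (-1:ℝ)..(-(1/2):ℝ), ((-1) + (-1)*t) * |t-s| from
      intervalIntegral.integral_congr (fun t ht => by
        rw [Set.uIcc_of_le (by norm_num)] at ht
        obtain ⟨hl, hr⟩ := ht
        show xi t * |t-s| = _
        rw [xi_eq, abs_of_nonneg (by linarith : (0:ℝ) ≤ t+1),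
          abs_of_nonpos (by linarith : t+1/2 ≤ 0), abs_of_nonpos (by linarith : t ≤ 0),
          abs_of_nonpos (by linarith : t-1/2 ≤ 0), abs_of_nonpos (by linarith : t-1 ≤ 0)]
        ring), integral_lin_abs]
  have P2 : (∫ t in (-(1/2):ℝ)..(0:ℝ), xi t * |t-s|) = Ga 1 3 s 0 - Ga 1 3 s (-(1/2)) := by
    rw [show (∫ t in (-(1/2):ℝ)..(0:ℝ), xi t * |t-s|)
        = ∫ t in (-(1/2):ℝ)..(0:ℝ), (1 + 3*t) * |t-s| from
      intervalIntegral.integral_congr (fun t ht => by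
        rw [Set.uIcc_of_le (by norm_num)] at ht
        obtain ⟨hl, hr⟩ := ht
        show xi t * |t-s| = _
        rw [xi_eq, abs_of_nonneg (by linarith : (0:ℝ) ≤ t+1),
          abs_of_nonneg (by linarith : (0:ℝ) ≤ t+1/2), abs_of_nonpos (by linarith : t ≤ 0),
          abs_of_nonpos (by linarith : t-1/2 ≤ 0), abs_of_nonpos (by linarith : t-1 ≤ 0)]
        ring), integral_lin_abs]
  have P3 : (∫ t in (0:ℝ)..(1/2:ℝ), xi t * |t-s|) = Ga 1 (-3) s (1/2) - Ga 1 (-3) s 0 := by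
    rw [show (∫ t in (0:ℝ)..(1/2:ℝ), xi t * |t-s|)
        = ∫ t in (0:ℝ)..(1/2:ℝ), (1 + (-3)*t) * |t-s| from
      intervalIntegral.integral_congr (fun t ht => by
        rw [Set.uIcc_of_le (by norm_num)] at ht
        obtain ⟨hl, hr⟩ := ht
        show xi t * |t-s| = _
        rw [xi_eq, abs_of_nonneg (by linarith : (0:ℝ) ≤ t+1),
          abs_of_nonneg (by linarith : (0:ℝ) ≤ t+1/2), abs_of_nonneg (by linarith : (0:ℝ) ≤ t),
          abs_of_nonpos (by linarith : t-1/2 ≤ 0), abs_of_nonpos (by linarith : t-1 ≤ 0)]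
        ring), integral_lin_abs]
  have P4 : (∫ t in (1/2:ℝ)..(1:ℝ), xi t * |t-s|) = Ga (-1) 1 s 1 - Ga (-1) 1 s (1/2) := by
    rw [show (∫ t in (1/2:ℝ)..(1:ℝ), xi t * |t-s|)
        = ∫ t in (1/2:ℝ)..(1:ℝ), ((-1) + 1*t) * |t-s| from
      intervalIntegral.integral_congr (fun t ht => by
        rw [Set.uIcc_of_le (by norm_num)] at ht
        obtain ⟨hl, hr⟩ := ht
        show xi t * |t-s| = _
        rw [xi_eq, abs_of_nonneg (by linarith : (0:ℝ) ≤ t+1),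
          abs_of_nonneg (by linarith : (0:ℝ) ≤ t+1/2), abs_of_nonneg (by linarith : (0:ℝ) ≤ t),
          abs_of_nonneg (by linarith : (0:ℝ) ≤ t-1/2), abs_of_nonpos (by linarith : t-1 ≤ 0)]
        ring), integral_lin_abs]
  rw [P1, P2, P3, P4]
  unfold Ga
  simp only [show ((-1:ℝ) - s) = -(s+1) from by ring,
    show ((-(1/2):ℝ) - s) = -(s+1/2) from by ring,
    show ((0:ℝ) - s) = -s from by ring,
    show ((1/2:ℝ) - s) = -(s-1/2) from by ring,
    show ((1:ℝ) - s) = -(s-1) from by ring, abs_neg]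
  rcases abs_cases (s+1) with ⟨e1, f1⟩ | ⟨e1, f1⟩ <;>
  rcases abs_cases (s+1/2) with ⟨e2, f2⟩ | ⟨e2, f2⟩ <;>
  rcases abs_cases s with ⟨e3, f3⟩ | ⟨e3, f3⟩ <;>
  rcases abs_cases (s-1/2) with ⟨e4, f4⟩ | ⟨e4, f4⟩ <;>
  rcases abs_cases (s-1) with ⟨e5, f5⟩ | ⟨e5, f5⟩ <;>
  rw [e1, e2, e3, e4, e5] <;>
  first
    | linarith
    | ring

lemma Hscale (θ : ℝ) (hθ : 0 < θ) (c y : ℝ) :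
    (∫ v : ℝ, xi ((v + c) / (2*θ)) * |v - y|) =
      -(1/(12*θ)) * (|y+c+2*θ|^3 - 4*|y+c+θ|^3 + 6*|y+c|^3 - 4*|y+c-θ|^3 + |y+c-2*θ|^3) := by
  have h2θ : (0:ℝ) < 2*θ := by linarith
  set z := y + c with hz
  have step1 : (∫ v : ℝ, xi ((v + c) / (2*θ)) * |v - y|)
      = ∫ w : ℝ, xi (w / (2*θ)) * |w - z| := by
    rw [← integral_add_right_eq_self (fun w => xi (w / (2*θ)) * |w - z|) c]
    congr 1
    funext v
    show xi ((v + c) / (2*θ)) * |v - y| = xi ((v + c) / (2*θ)) * |v + c - z|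
    rw [show v + c - z = v - y from by rw [hz]; ring]
  have step2 : (∫ w : ℝ, xi (w / (2*θ)) * |w - z|)
      = |2*θ| • ∫ t : ℝ, xi t * |2*θ*t - z| := by
    rw [← MeasureTheory.Measure.integral_comp_div (fun t => xi t * |2*θ*t - z|) (2*θ)]
    congr 1
    funext w
    show xi (w / (2*θ)) * |w - z| = xi (w / (2*θ)) * |2*θ*(w/(2*θ)) - z|
    rw [show 2*θ*(w/(2*θ)) = w from by field_simp]
  have e : ∀ t : ℝ, xi t * |2*θ*t - z| = (2*θ) * (xi t * |t - z/(2*θ)|) := by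
    intro t
    rw [show 2*θ*t - z = (2*θ)*(t - z/(2*θ)) from by field_simp, abs_mul, abs_of_pos h2θ]
    ring
  rw [step1, step2]
  simp only [e]
  rw [MeasureTheory.integral_const_mul, K_eq]
  have E1 : |z/(2*θ) + 1| = |z + 2*θ|/(2*θ) := by
    rw [show z/(2*θ) + 1 = (z + 2*θ)/(2*θ) from by field_simp, abs_div, abs_of_pos h2θ]
  have E2 : |z/(2*θ) + 1/2| = |z + θ|/(2*θ) := by
    rw [show z/(2*θ) + 1/2 = (z + θ)/(2*θ) from by field_simp, abs_div, abs_of_pos h2θ]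
  have E3 : |z/(2*θ)| = |z|/(2*θ) := by
    rw [abs_div, abs_of_pos h2θ]
  have E4 : |z/(2*θ) - 1/2| = |z - θ|/(2*θ) := by
    rw [show z/(2*θ) - 1/2 = (z - θ)/(2*θ) from by field_simp, abs_div, abs_of_pos h2θ]
  have E5 : |z/(2*θ) - 1| = |z - 2*θ|/(2*θ) := by
    rw [show z/(2*θ) - 1 = (z - 2*θ)/(2*θ) from by field_simp, abs_div, abs_of_pos h2θ]
  rw [E1, E2, E3, E4, E5, abs_of_pos h2θ, smul_eq_mul]
  field_simp
  ring

set_option maxHeartbeats 1000000 in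
theorem statement9 (θ θ' : ℝ) (hθ : 0 < θ) (hθ' : 0 < θ') (a b : ℝ) :
    (∫ v : ℝ, xi (v / (2*θ) + a/2) * xi (v / (2*θ') + b/2))
      = (1 / (48 * θ * θ')) * cdiff4 θ (cdiff4 θ' (fun x => |x| ^ (3:ℕ))) (a*θ - b*θ') := by
  have h2θ : (0:ℝ) < 2*θ := by linarith
  have h2θ' : (0:ℝ) < 2*θ' := by linarith
  have hcont : ∀ q : ℝ, Continuous (fun v => xi ((v + a*θ)/(2*θ)) * |v - q|) := by
    intro q
    exact (xi_cont.comp (by continuity)).mul (by continuity)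
  have hsupp : HasCompactSupport (fun v => xi ((v + a*θ)/(2*θ))) := by
    apply HasCompactSupport.intro (isCompact_Icc (a := -(a*θ) - 2*θ) (b := -(a*θ) + 2*θ))
    intro v hv
    simp only [Set.mem_Icc, not_and_or, not_le] at hv
    apply xi_zero
    rw [abs_div, abs_of_pos h2θ, le_div_iff₀ h2θ]
    rcases hv with h | h
    · rw [abs_of_nonpos (by linarith)]; linarith
    · rw [abs_of_nonneg (by linarith)]; linarith
  have hInt : ∀ q : ℝ, Integrable (fun v => xi ((v + a*θ)/(2*θ)) * |v - q|) := by
    intro q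
    exact (hcont q).integrable_of_hasCompactSupport hsupp.mul_right
  have key : ∀ v : ℝ, xi (v / (2*θ) + a/2) * xi (v / (2*θ') + b/2)
      = (-(1/(4*θ'))) * ((xi ((v + a*θ)/(2*θ)) * |v - (-(b*θ') - 2*θ')|)
          - 4*(xi ((v + a*θ)/(2*θ)) * |v - (-(b*θ') - θ')|)
          + 6*(xi ((v + a*θ)/(2*θ)) * |v - (-(b*θ'))|)
          - 4*(xi ((v + a*θ)/(2*θ)) * |v - (-(b*θ') + θ')|)
          + (xi ((v + a*θ)/(2*θ)) * |v - (-(b*θ') + 2*θ')|)) := by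
    intro v
    rw [show v / (2*θ) + a/2 = (v + a*θ)/(2*θ) from by field_simp]
    rw [show v / (2*θ') + b/2 = (v + b*θ')/(2*θ') from by field_simp]
    rw [xi_eq ((v + b*θ')/(2*θ'))]
    rw [show |(v + b*θ')/(2*θ') + 1| = |v - (-(b*θ') - 2*θ')|/(2*θ') from by
        rw [show (v + b*θ')/(2*θ') + 1 = (v - (-(b*θ') - 2*θ'))/(2*θ') from by field_simp; ring,
          abs_div, abs_of_pos h2θ'],
      show |(v + b*θ')/(2*θ') + 1/2| = |v - (-(b*θ') - θ')|/(2*θ') from by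
        rw [show (v + b*θ')/(2*θ') + 1/2 = (v - (-(b*θ') - θ'))/(2*θ') from by field_simp; ring,
          abs_div, abs_of_pos h2θ'],
      show |(v + b*θ')/(2*θ') - 1/2| = |v - (-(b*θ') + θ')|/(2*θ') from by
        rw [show (v + b*θ')/(2*θ') - 1/2 = (v - (-(b*θ') + θ'))/(2*θ') from by field_simp; ring,
          abs_div, abs_of_pos h2θ'],
      show |(v + b*θ')/(2*θ') - 1| = |v - (-(b*θ') + 2*θ')|/(2*θ') from by
        rw [show (v + b*θ')/(2*θ') - 1 = (v - (-(b*θ') + 2*θ'))/(2*θ') from by field_simp; ring,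
          abs_div, abs_of_pos h2θ'],
      show |(v + b*θ')/(2*θ')| = |v - (-(b*θ'))|/(2*θ') from by
        rw [show (v + b*θ')/(2*θ') = (v - (-(b*θ')))/(2*θ') from by ring,
          abs_div, abs_of_pos h2θ']]
    field_simp
    ring
  simp only [key]
  rw [MeasureTheory.integral_const_mul]
  have A1 : Integrable (fun v : ℝ => xi ((v + a*θ)/(2*θ)) * |v - (-(b*θ') - 2*θ')| - 4*(xi ((v + a*θ)/(2*θ)) * |v - (-(b*θ') - θ')|)) volume :=
    (hInt _).sub ((hInt _).const_mul 4)
  have A2 : Integrable (fun v : ℝ => xi ((v + a*θ)/(2*θ)) * |v - (-(b*θ') - 2*θ')| - 4*(xi ((v + a*θ)/(2*θ)) * |v - (-(b*θ') - θ')|) + 6*(xi ((v + a*θ)/(2*θ)) * |v - (-(b*θ'))|)) volume :=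
    A1.add ((hInt _).const_mul 6)
  have A3 : Integrable (fun v : ℝ => xi ((v + a*θ)/(2*θ)) * |v - (-(b*θ') - 2*θ')| - 4*(xi ((v + a*θ)/(2*θ)) * |v - (-(b*θ') - θ')|) + 6*(xi ((v + a*θ)/(2*θ)) * |v - (-(b*θ'))|) - 4*(xi ((v + a*θ)/(2*θ)) * |v - (-(b*θ') + θ')|)) volume :=
    A2.sub ((hInt _).const_mul 4)
  rw [MeasureTheory.integral_add A3 (hInt _),
      MeasureTheory.integral_sub A2 ((hInt _).const_mul 4),
      MeasureTheory.integral_add A1 ((hInt _).const_mul 6),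
      MeasureTheory.integral_sub (hInt _) ((hInt _).const_mul 4),
      MeasureTheory.integral_const_mul, MeasureTheory.integral_const_mul,
      MeasureTheory.integral_const_mul]
  rw [Hscale θ hθ (a*θ) (-(b*θ') - 2*θ'), Hscale θ hθ (a*θ) (-(b*θ') - θ'),
      Hscale θ hθ (a*θ) (-(b*θ')), Hscale θ hθ (a*θ) (-(b*θ') + θ'),
      Hscale θ hθ (a*θ) (-(b*θ') + 2*θ')]
  unfold cdiff4
  field_simp
  ring_nf
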